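/- (Proposition 2.) Assume case 1: α_{f,β} := F_f(y*_{f,β}−1) < β < γ_{f,β} := F_f(y*_{f,β}), set κ_{f,β} = min{D_KL(β||α_{f,β}), D_KL(β||γ_{f,β})} > 0 (with D_KL(β||0) = +∞ if α_{f,β} = 0), let τ_{f,β} be a positive integer such that for every t ≥ τ_{f,β} + 1 both t²·exp(−κ_{f,β}·(t−1)) < 1/2 and (t+1)²·exp(−κ_{f,β}·t) < exp(−κ_{f,β}/2)·t²·exp(−κ_{f,β}·(t−1)), and assume ε_f := f(d̄) > 0. Then for every T ≥ 1, R^{T2}_f(y) ≤ h·d̄·(τ_{f,β} + 1/(1 − exp(−κ_{f,β}/2)) + (1 − ε_f)/ε_f + 1/(2·ε_f·(1 − exp(−κ_{f,β}/2)))). -/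

import Mathlib

open Finset

noncomputable section

/-- `f` is a demand distribution on `{0, 1, ..., dbar}`. -/
def IsDist (dbar : ℕ) (f : ℕ → ℝ) : Prop :=
  (∀ d, 0 ≤ f d) ∧ (∀ d, dbar < d → f d = 0) ∧ ∑ d ∈ Finset.range (dbar + 1), f d = 1

/-- The cdf `F_f(d) = Σ_{d'=0}^{d} f(d')`. -/
def cdf (f : ℕ → ℝ) (d : ℕ) : ℝ := ∑ i ∈ Finset.range (d + 1), f i

/-- `F_f(d-1)`, with the convention `F_f(-1) = 0`. -/
def cdfm1 (f : ℕ → ℝ) (d : ℕ) : ℝ := ∑ i ∈ Finset.range d, f i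

/-- The one-period expected cost under order-up-to level `y`. -/
def Q (h b : ℝ) (dbar : ℕ) (f : ℕ → ℝ) (y : ℕ) : ℝ :=
  ∑ d ∈ Finset.range (dbar + 1),
    f d * (h * max ((y : ℝ) - (d : ℝ)) 0 + b * max ((d : ℝ) - (y : ℝ)) 0)

/-- The minimum one-period expected cost. -/
def Qstar (h b : ℝ) (dbar : ℕ) (f : ℕ → ℝ) : ℝ :=
  (Finset.range (dbar + 1)).inf' ⟨0, Finset.mem_range.mpr (Nat.succ_pos dbar)⟩ (Q h b dbar f)

/-- The newsvendor quantile `y*_{f,β} = min {d ∈ {0,...,dbar} | F_f(d) ≥ β}`. -/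
def ystar (dbar : ℕ) (β : ℝ) (f : ℕ → ℝ) : ℕ :=
  sInf {d : ℕ | d ≤ dbar ∧ β ≤ cdf f d}

/-- The empirical distribution of `n` observations. -/
def emp (n : ℕ) (d : Fin n → ℕ) (k : ℕ) : ℝ :=
  (∑ s : Fin n, if d s = k then (1 : ℝ) else 0) / n

/-- The empirical newsvendor quantile `ŷ_{n+1}` computed from `n` observations. -/
def yhat (dbar : ℕ) (β : ℝ) (n : ℕ) (d : Fin n → ℕ) : ℕ := ystar dbar β (emp n d)

/-- The order-up-to level of period `n+1` of the newsvendor-based policy, given the demands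
of periods `1,...,n`:  `y_1 = ŷ_1 = 0` and `y_t = max (ŷ_t) (y_{t-1} - d_{t-1})`. -/
def pol (dbar : ℕ) (β : ℝ) : (n : ℕ) → (Fin n → ℕ) → ℕ
  | 0, _ => 0
  | n + 1, d =>
      max (yhat dbar β (n + 1) d) (pol dbar β n (fun s => d s.castSucc) - d (Fin.last n))

/-- The expectation `E_f[g(D_1,...,D_n)]` under i.i.d. draws from `f`. -/
def expec (dbar n : ℕ) (f : ℕ → ℝ) (g : (Fin n → ℕ) → ℝ) : ℝ :=
  ∑ d : Fin n → Fin (dbar + 1), (∏ s : Fin n, f (d s)) * g (fun s => (d s : ℕ))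

open scoped Classical in
/-- The probability `P_f[(D_1,...,D_n) ∈ E]` under i.i.d. draws from `f`. -/
def prob (dbar n : ℕ) (f : ℕ → ℝ) (E : (Fin n → ℕ) → Prop) : ℝ :=
  ∑ d : Fin n → Fin (dbar + 1), if E (fun s => (d s : ℕ)) then ∏ s : Fin n, f (d s) else 0

/-- `R^{T1}_f(y) = Σ_{t=1}^{T} E_f[Q_f(ŷ_t)] − T·Q*_f`. -/
def regretT1 (h b : ℝ) (dbar : ℕ) (β : ℝ) (f : ℕ → ℝ) (T : ℕ) : ℝ :=
  ∑ t ∈ Finset.range T, expec dbar t f (fun d => Q h b dbar f (yhat dbar β t d))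
    - (T : ℝ) * Qstar h b dbar f

/-- `R^{T2}_f(y) = Σ_{t=3}^{T} E_f[Q_f(y_t) − Q_f(ŷ_t)]` (the index `n = t - 1` below). -/
def regretT2 (h b : ℝ) (dbar : ℕ) (β : ℝ) (f : ℕ → ℝ) (T : ℕ) : ℝ :=
  ∑ n ∈ Finset.Ico 2 T,
    expec dbar n f (fun d => Q h b dbar f (pol dbar β n d) - Q h b dbar f (yhat dbar β n d))

/-- The `T`-period regret `R^{T}_f(y) = Σ_{t=1}^{T} E_f[Q_f(y_t(D_1,...,D_{t-1}))] − T·Q*_f`. -/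
def regret (h b : ℝ) (dbar : ℕ) (β : ℝ) (f : ℕ → ℝ) (T : ℕ) : ℝ :=
  ∑ t ∈ Finset.range T, expec dbar t f (fun d => Q h b dbar f (pol dbar β t d))
    - (T : ℝ) * Qstar h b dbar f

/-- The binary Kullback–Leibler divergence between Bernoulli distributions `u` and `v`. -/
def klB (u v : ℝ) : ℝ := u * Real.log (u / v) + (1 - u) * Real.log ((1 - u) / (1 - v))

/-- The total variation distance `δ_V(f,g)`. -/
def tvDist (dbar : ℕ) (f g : ℕ → ℝ) : ℝ := (∑ d ∈ Finset.range (dbar + 1), |f d - g d|) / 2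


open Finset in
lemma geomLe (r : ℝ) (h0 : 0 ≤ r) (h1 : r < 1) (n : ℕ) :
    ∑ i ∈ range n, r ^ i ≤ 1 / (1 - r) := by
  have h1' : 0 < 1 - r := by linarith
  rw [le_div_iff₀ h1']
  have := geom_sum_mul r n
  have hrn : 0 ≤ r ^ n := pow_nonneg h0 n
  nlinarith [this]

open Finset in
lemma sum_pi_succ {F : Type*} [Fintype F] (n : ℕ) (g : (Fin (n + 1) → F) → ℝ) :
    ∑ d : Fin (n + 1) → F, g d = ∑ d : Fin n → F, ∑ j : F, g (Fin.snoc d j) := by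
  rw [← Equiv.sum_comp
      (⟨fun p => Fin.snoc p.1 p.2, fun d => (Fin.init d, d (Fin.last n)),
        fun p => by simp, fun d => Fin.snoc_init_self d⟩ :
        ((Fin n → F) × F) ≃ (Fin (n + 1) → F)) g,
    Fintype.sum_prod_type]
  simp only [Equiv.coe_fn_mk]
open Finset in
lemma sum_f_fin {dbar : ℕ} {f : ℕ → ℝ} (hf : IsDist dbar f) :
    ∑ j : Fin (dbar + 1), f (j : ℕ) = 1 := by
  rw [Fin.sum_univ_eq_sum_range]; exact hf.2.2

open Finset in
lemma sum_ne_dbar {dbar : ℕ} {f : ℕ → ℝ} (hf : IsDist dbar f) :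
    ∑ j : Fin (dbar + 1), (if (j : ℕ) ≠ dbar then f (j : ℕ) else 0) = 1 - f dbar := by
  classical
  have h1 : ∑ j : Fin (dbar + 1), (if (j : ℕ) = dbar then f (j : ℕ) else 0) = f dbar := by
    have : ∀ j : Fin (dbar + 1), ((j : ℕ) = dbar ↔ j = Fin.last dbar) := by
      intro j; constructor
      · intro hj; exact Fin.ext (by simpa using hj)
      · intro hj; subst hj; simp
    rw [Finset.sum_congr rfl (fun j _ => by rw [if_congr (this j) rfl rfl])]
    simp
  have h2 : (∑ j : Fin (dbar + 1), (if (j : ℕ) ≠ dbar then f (j : ℕ) else 0))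
      + ∑ j : Fin (dbar + 1), (if (j : ℕ) = dbar then f (j : ℕ) else 0)
      = ∑ j : Fin (dbar + 1), f (j : ℕ) := by
    rw [← Finset.sum_add_distrib]
    refine Finset.sum_congr rfl fun j _ => ?_
    by_cases hj : (j : ℕ) = dbar <;> simp [hj]
  rw [sum_f_fin hf] at h2
  linarith [h1, h2]

open Finset in
lemma prodf_nonneg {dbar n : ℕ} {f : ℕ → ℝ} (hf : IsDist dbar f)
    (d : Fin n → Fin (dbar + 1)) : 0 ≤ ∏ s : Fin n, f (d s) :=
  Finset.prod_nonneg fun s _ => hf.1 _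

open Finset in
lemma sum_prod_f {dbar : ℕ} {f : ℕ → ℝ} (hf : IsDist dbar f) :
    ∀ n, ∑ d : Fin n → Fin (dbar + 1), ∏ s : Fin n, f (d s) = 1 := by
  intro n
  induction n with
  | zero => simp
  | succ n ih =>
    rw [sum_pi_succ (F := Fin (dbar + 1)) n (fun d => ∏ s : Fin (n + 1), f (d s))]
    have : ∀ (d : Fin n → Fin (dbar + 1)) (j : Fin (dbar + 1)),
        ∏ s : Fin (n + 1), f ((Fin.snoc d j : Fin (n+1) → Fin (dbar+1)) s)
          = (∏ s : Fin n, f (d s)) * f j := by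
      intro d j
      rw [Fin.prod_univ_castSucc]
      simp [Fin.snoc_castSucc, Fin.snoc_last]
    calc ∑ d : Fin n → Fin (dbar + 1), ∑ j : Fin (dbar + 1),
          ∏ s : Fin (n + 1), f ((Fin.snoc d j : Fin (n+1) → Fin (dbar+1)) s)
        = ∑ d : Fin n → Fin (dbar + 1), (∏ s : Fin n, f (d s)) * ∑ j : Fin (dbar + 1), f (j:ℕ) := by
          refine Finset.sum_congr rfl fun d _ => ?_
          rw [Finset.mul_sum]
          exact Finset.sum_congr rfl fun j _ => this d j
      _ = 1 := by rw [sum_f_fin hf, ← Finset.sum_mul, ih]; ring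

open Finset in
lemma prob_nonneg {dbar n : ℕ} {f : ℕ → ℝ} (hf : IsDist dbar f)
    (E : (Fin n → ℕ) → Prop) : 0 ≤ prob dbar n f E := by
  classical
  refine Finset.sum_nonneg fun d _ => ?_
  split_ifs
  · exact prodf_nonneg hf d
  · exact le_rfl

open Finset in
lemma prob_le_one {dbar n : ℕ} {f : ℕ → ℝ} (hf : IsDist dbar f)
    (E : (Fin n → ℕ) → Prop) : prob dbar n f E ≤ 1 := by
  classical
  rw [← sum_prod_f hf n]
  refine Finset.sum_le_sum fun d _ => ?_
  split_ifs
  · exact le_rfl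
  · exact prodf_nonneg hf d

open Finset in
lemma prob_mono {dbar n : ℕ} {f : ℕ → ℝ} (hf : IsDist dbar f)
    {E E' : (Fin n → ℕ) → Prop} (hEE : ∀ d, E d → E' d) :
    prob dbar n f E ≤ prob dbar n f E' := by
  classical
  refine Finset.sum_le_sum fun d _ => ?_
  split_ifs with h1 h2
  · exact le_rfl
  · exact absurd (hEE _ h1) h2
  · exact prodf_nonneg hf d
  · exact le_rfl

open Finset in
lemma prob_congr {dbar n : ℕ} {f : ℕ → ℝ}
    {E E' : (Fin n → ℕ) → Prop} (hEE : ∀ d, E d ↔ E' d) :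
    prob dbar n f E = prob dbar n f E' := by
  classical
  refine Finset.sum_congr rfl fun d _ => ?_
  rw [if_congr (hEE _) rfl rfl]

open Finset in
lemma prob_or_le {dbar n : ℕ} {f : ℕ → ℝ} (hf : IsDist dbar f)
    (E E' : (Fin n → ℕ) → Prop) :
    prob dbar n f (fun d => E d ∨ E' d) ≤ prob dbar n f E + prob dbar n f E' := by
  classical
  rw [prob, prob, prob, ← Finset.sum_add_distrib]
  refine Finset.sum_le_sum fun d _ => ?_
  have h0 := prodf_nonneg hf d
  split_ifs <;> first | linarith | tauto

open Finset in
lemma prob_exists_le {dbar n : ℕ} {f : ℕ → ℝ} (hf : IsDist dbar f)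
    (s : Finset ℕ) (F : ℕ → (Fin n → ℕ) → Prop) :
    prob dbar n f (fun d => ∃ u ∈ s, F u d) ≤ ∑ u ∈ s, prob dbar n f (F u) := by
  classical
  have key : ∀ d : Fin n → Fin (dbar + 1),
      (if (∃ u ∈ s, F u fun sx => (d sx : ℕ)) then ∏ sx : Fin n, f (d sx) else 0)
      ≤ ∑ u ∈ s, (if F u (fun sx => (d sx : ℕ)) then ∏ sx : Fin n, f (d sx) else 0) := by
    intro d
    split_ifs with hE
    · obtain ⟨u, hu, hFu⟩ := hE
      calc ∏ sx : Fin n, f (d sx)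
          = (if F u (fun sx => (d sx : ℕ)) then ∏ sx : Fin n, f (d sx) else 0) := by
            rw [if_pos hFu]
        _ ≤ _ := Finset.single_le_sum
            (f := fun u => if F u (fun sx => (d sx : ℕ)) then ∏ sx : Fin n, f (d sx) else 0)
            (fun v _ => by split_ifs; exacts [prodf_nonneg hf d, le_rfl]) hu
    · exact Finset.sum_nonneg fun v _ => by split_ifs; exacts [prodf_nonneg hf d, le_rfl]
  calc prob dbar n f (fun d => ∃ u ∈ s, F u d)
      ≤ ∑ d : Fin n → Fin (dbar + 1), ∑ u ∈ s,
          (if F u (fun sx => (d sx : ℕ)) then ∏ sx : Fin n, f (d sx) else 0) := by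
        refine Finset.sum_le_sum fun d _ => ?_
        convert key d using 2
        rfl
    _ = ∑ u ∈ s, prob dbar n f (F u) := Finset.sum_comm
def dext {n : ℕ} (d : Fin n → ℕ) (k : ℕ) : ℕ := if h : k < n then d ⟨k, h⟩ else 0

def preD {n : ℕ} (u : ℕ) (d : Fin n → ℕ) : Fin u → ℕ := fun s => dext d s.val

open Finset in
lemma coe_snoc {dbar n : ℕ} (d : Fin n → Fin (dbar + 1)) (j : Fin (dbar + 1)) :
    (fun s : Fin (n+1) => ((Fin.snoc d j : Fin (n+1) → Fin (dbar+1)) s : ℕ))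
      = Fin.snoc (fun s => (d s : ℕ)) (j : ℕ) := by
  funext s
  refine Fin.lastCases ?_ ?_ s
  · simp [Fin.snoc_last]
  · intro i; simp [Fin.snoc_castSucc]

open Finset in
lemma prod_f_snoc {dbar n : ℕ} (f : ℕ → ℝ) (d : Fin n → Fin (dbar + 1)) (j : Fin (dbar + 1)) :
    ∏ s : Fin (n+1), f (((Fin.snoc d j : Fin (n+1) → Fin (dbar+1)) s : ℕ))
      = (∏ s : Fin n, f (d s)) * f (j : ℕ) := by
  rw [Fin.prod_univ_castSucc]
  simp [Fin.snoc_castSucc, Fin.snoc_last]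

lemma preD_snoc {n u : ℕ} (hun : u ≤ n) (c : Fin n → ℕ) (jj : ℕ) :
    preD u (Fin.snoc c jj : Fin (n+1) → ℕ) = preD u c := by
  funext s
  have hs : (s : ℕ) < n := lt_of_lt_of_le s.isLt hun
  have hs1 : (s : ℕ) < n + 1 := Nat.lt_succ_of_lt hs
  show dext (Fin.snoc c jj : Fin (n+1) → ℕ) s.val = dext c s.val
  rw [dext, dext, dif_pos hs1, dif_pos hs]
  have : (⟨s.val, hs1⟩ : Fin (n+1)) = Fin.castSucc ⟨s.val, hs⟩ := by
    apply Fin.ext; simp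
  rw [this, Fin.snoc_castSucc]

open Finset in
lemma prob_succ_split {dbar n : ℕ} {f : ℕ → ℝ}
    (Ev : (Fin (n+1) → ℕ) → Prop) (E1 : (Fin n → ℕ) → Prop) (c : ℕ → Prop) [DecidablePred c]
    (hEv : ∀ (c0 : Fin n → ℕ) (j : ℕ), j ≤ dbar → (Ev (Fin.snoc c0 j) ↔ (E1 c0 ∧ c j))) :
    prob dbar (n+1) f Ev
      = prob dbar n f E1 * ∑ j ∈ Finset.range (dbar+1), (if c j then f j else 0) := by
  classical
  rw [prob, sum_pi_succ (F := Fin (dbar + 1)) n]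
  have key : ∀ (d : Fin n → Fin (dbar + 1)) (j : Fin (dbar + 1)),
      (if Ev (fun s : Fin (n+1) => ((Fin.snoc d j : Fin (n+1) → Fin (dbar+1)) s : ℕ))
        then ∏ s : Fin (n+1), f (((Fin.snoc d j : Fin (n+1) → Fin (dbar+1)) s : ℕ)) else 0)
      = (if E1 (fun s : Fin n => (d s : ℕ)) then ∏ s : Fin n, f (d s) else 0)
        * (if c (j : ℕ) then f (j : ℕ) else 0) := by
    intro d j
    rw [prod_f_snoc]
    have h1 : Ev (fun s : Fin (n+1) => ((Fin.snoc d j : Fin (n+1) → Fin (dbar+1)) s : ℕ))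
        ↔ (E1 (fun s : Fin n => (d s : ℕ)) ∧ c (j : ℕ)) := by
      rw [coe_snoc]
      exact hEv _ _ (Nat.lt_succ_iff.mp j.isLt)
    rw [if_congr h1 rfl rfl]
    by_cases hA : E1 (fun s : Fin n => (d s : ℕ)) <;> by_cases hB : c (j : ℕ)
      <;> simp [hA, hB]
  calc ∑ d : Fin n → Fin (dbar+1), ∑ j : Fin (dbar+1),
        (if Ev (fun s : Fin (n+1) => ((Fin.snoc d j : Fin (n+1) → Fin (dbar+1)) s : ℕ))
          then ∏ s : Fin (n+1), f (((Fin.snoc d j : Fin (n+1) → Fin (dbar+1)) s : ℕ)) else 0)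
      = ∑ d : Fin n → Fin (dbar+1),
          ((if E1 (fun s : Fin n => (d s : ℕ)) then ∏ s : Fin n, f (d s) else 0)
            * ∑ j : Fin (dbar+1), (if c (j : ℕ) then f (j : ℕ) else 0)) := by
        refine Finset.sum_congr rfl fun d _ => ?_
        rw [Finset.mul_sum]
        exact Finset.sum_congr rfl fun j _ => key d j
    _ = prob dbar n f E1 * ∑ j ∈ Finset.range (dbar+1), (if c j then f j else 0) := by
        rw [← Finset.sum_mul, ← prob,
          Fin.sum_univ_eq_sum_range (fun k => if c k then f k else 0) (dbar+1)]

open Finset in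
lemma sum_range_ne_dbar {dbar : ℕ} {f : ℕ → ℝ} (hf : IsDist dbar f) :
    ∑ j ∈ Finset.range (dbar+1), (if j ≠ dbar then f j else 0) = 1 - f dbar := by
  classical
  have h1 : ∑ j ∈ Finset.range (dbar+1), (if j = dbar then f j else 0) = f dbar := by
    rw [Finset.sum_ite_eq' (Finset.range (dbar+1)) dbar f]
    simp
  have h2 : (∑ j ∈ Finset.range (dbar+1), (if j ≠ dbar then f j else 0))
      + ∑ j ∈ Finset.range (dbar+1), (if j = dbar then f j else 0)
      = ∑ j ∈ Finset.range (dbar+1), f j := by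
    rw [← Finset.sum_add_distrib]
    refine Finset.sum_congr rfl fun j _ => ?_
    by_cases hj : j = dbar <;> simp [hj]
  rw [hf.2.2] at h2
  linarith

open Finset in
lemma prob_and_suffix {dbar : ℕ} {f : ℕ → ℝ} (hf : IsDist dbar f) (u : ℕ)
    (E : (Fin u → ℕ) → Prop) :
    ∀ n, u ≤ n →
      prob dbar n f (fun d => E (preD u d) ∧ ∀ s : Fin n, u ≤ (s : ℕ) → d s ≠ dbar)
        = prob dbar u f E * (1 - f dbar) ^ (n - u) := by
  intro n
  induction n with
  | zero =>
    intro hu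
    interval_cases u
    rw [Nat.sub_self, pow_zero, mul_one]
    refine prob_congr fun d => ?_
    have hd0 : preD 0 d = d := funext fun s => s.elim0
    rw [hd0]
    exact ⟨fun hd => hd.1, fun hd => ⟨hd, fun s => s.elim0⟩⟩
  | succ n ih =>
    intro hu
    rcases Nat.lt_or_ge n u with hn | hn
    · -- u = n + 1 : base case
      have hue : u = n + 1 := by omega
      subst hue
      rw [Nat.sub_self, pow_zero, mul_one]
      refine prob_congr fun d => ?_
      have hpre : preD (n+1) d = d := by
        funext s
        show dext d s.val = d s
        rw [dext, dif_pos s.isLt]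
      rw [hpre]
      constructor
      · exact fun hd => hd.1
      · intro hd
        exact ⟨hd, fun s hs => absurd hs (by omega)⟩
    · -- u ≤ n : inductive step
      rw [prob_succ_split _ (fun d => E (preD u d) ∧ ∀ s : Fin n, u ≤ (s : ℕ) → d s ≠ dbar)
        (fun j => j ≠ dbar) ?_, ih hn, sum_range_ne_dbar hf]
      · have hpow : n + 1 - u = (n - u) + 1 := by omega
        rw [hpow, pow_succ]
        ring
      · intro c0 j hj
        rw [preD_snoc hn]
        constructor
        · rintro ⟨hE, hB⟩
          refine ⟨⟨hE, fun s hs => ?_⟩, ?_⟩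
          · have := hB s.castSucc (by simpa using hs)
            simpa [Fin.snoc_castSucc] using this
          · have := hB (Fin.last n) (by simp only [Fin.val_last]; omega)
            simpa [Fin.snoc_last] using this
        · rintro ⟨⟨hE, hB⟩, hj'⟩
          refine ⟨hE, fun s hs => ?_⟩
          refine Fin.lastCases ?_ ?_ s hs
          · intro _; simpa [Fin.snoc_last] using hj'
          · intro i hi
            have := hB i (by simpa using hi)
            simpa [Fin.snoc_castSucc] using this
open Finset in
lemma sum_prod_pow {k : ℕ} (g : Fin k → ℝ) :
    ∀ n : ℕ, ∑ d : Fin n → Fin k, ∏ s : Fin n, g (d s) = (∑ j : Fin k, g j) ^ n := by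
  intro n
  induction n with
  | zero => simp
  | succ n ih =>
    rw [sum_pi_succ (F := Fin k) n (fun d => ∏ s : Fin (n+1), g (d s))]
    have key : ∀ (d : Fin n → Fin k) (j : Fin k),
        ∏ s : Fin (n+1), g ((Fin.snoc d j : Fin (n+1) → Fin k) s)
          = (∏ s : Fin n, g (d s)) * g j := by
      intro d j
      rw [Fin.prod_univ_castSucc]
      simp [Fin.snoc_castSucc, Fin.snoc_last]
    calc ∑ d : Fin n → Fin k, ∑ j : Fin k,
          ∏ s : Fin (n+1), g ((Fin.snoc d j : Fin (n+1) → Fin k) s)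
        = ∑ d : Fin n → Fin k, (∏ s : Fin n, g (d s)) * ∑ j : Fin k, g j := by
          refine Finset.sum_congr rfl fun d _ => ?_
          rw [Finset.mul_sum]
          exact Finset.sum_congr rfl fun j _ => key d j
      _ = (∑ j : Fin k, g j) ^ (n+1) := by
          rw [← Finset.sum_mul, ih, pow_succ]

open Finset in
lemma prob_zero_of_null {dbar : ℕ} {f : ℕ → ℝ} (hf : IsDist dbar f) (n : ℕ)
    (c : ℕ → Prop) [DecidablePred c]
    (hnull : ∑ j ∈ (Finset.range (dbar+1)).filter c, f j = 0)
    (θ : ℝ) (hθ : 0 < θ) (hn : 1 ≤ n) :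
    prob dbar n f (fun d => θ * n ≤ ∑ s : Fin n, (if c (d s) then (1:ℝ) else 0)) = 0 := by
  classical
  refine Finset.sum_eq_zero fun d _ => ?_
  split_ifs with hE
  · -- some coordinate satisfies c, and has zero f-mass
    have hex : ∃ s : Fin n, c ((d s : ℕ)) := by
      by_contra hno
      push_neg at hno
      have hzero : (∑ s : Fin n, (if c ((d s : ℕ)) then (1:ℝ) else 0)) = 0 :=
        Finset.sum_eq_zero fun s _ => if_neg (hno s)
      dsimp only at hE
      rw [hzero] at hE
      have : (0:ℝ) < θ * n := by
        have : (1:ℝ) ≤ (n:ℝ) := by exact_mod_cast hn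
        nlinarith
      linarith
    obtain ⟨s, hs⟩ := hex
    have hzero : f ((d s : ℕ)) = 0 := by
      have hmem : ((d s : ℕ)) ∈ (Finset.range (dbar+1)).filter c := by
        rw [Finset.mem_filter, Finset.mem_range]
        exact ⟨(d s).isLt, hs⟩
      have := (Finset.sum_eq_zero_iff_of_nonneg
        (fun j _ => hf.1 j)).mp hnull _ hmem
      exact this
    exact Finset.prod_eq_zero (Finset.mem_univ s) hzero
  · rfl

open Finset in
lemma chernoff {dbar : ℕ} {f : ℕ → ℝ} (hf : IsDist dbar f) (n : ℕ)
    (c : ℕ → Prop) [DecidablePred c] (θ p : ℝ)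
    (hp : p = ∑ j ∈ (Finset.range (dbar+1)).filter c, f j)
    (h0 : 0 < p) (hpθ : p < θ) (hθ1 : θ < 1) :
    prob dbar n f (fun d => θ * n ≤ ∑ s : Fin n, (if c (d s) then (1:ℝ) else 0))
      ≤ Real.exp (-(n:ℝ) * klB θ p) := by
  classical
  set L := Real.log (θ * (1 - p) / (p * (1 - θ))) with hLdef
  have hθ0 : 0 < θ := lt_trans h0 hpθ
  have h1θ : 0 < 1 - θ := by linarith
  have hp1 : 0 < 1 - p := by linarith
  have hratio : 1 ≤ θ * (1 - p) / (p * (1 - θ)) := by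
    rw [le_div_iff₀ (by positivity)]
    nlinarith
  have hL : 0 ≤ L := Real.log_nonneg hratio
  have hexpL : Real.exp L = θ * (1 - p) / (p * (1 - θ)) := Real.exp_log (by positivity)
  set w : ℕ → ℝ := fun j => if c j then Real.exp L else 1 with hwdef
  have hw1 : ∀ j, 0 < w j := by
    intro j; rw [hwdef]; dsimp only; split_ifs
    · exact Real.exp_pos L
    · norm_num
  -- Step A
  have stepA : prob dbar n f (fun d => θ * n ≤ ∑ s : Fin n, (if c (d s) then (1:ℝ) else 0))
      ≤ (∑ d : Fin n → Fin (dbar+1), ∏ s : Fin n, (f ((d s : ℕ)) * w ((d s : ℕ))))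
          * Real.exp (-(L * θ * n)) := by
    rw [prob, Finset.sum_mul]
    refine Finset.sum_le_sum fun d _ => ?_
    have hprod : ∏ s : Fin n, (f ((d s : ℕ)) * w ((d s : ℕ)))
        = (∏ s : Fin n, f ((d s : ℕ)))
          * Real.exp (L * ∑ s : Fin n, (if c ((d s : ℕ)) then (1:ℝ) else 0)) := by
      rw [Finset.prod_mul_distrib]
      congr 1
      rw [Finset.mul_sum, Real.exp_sum]
      refine Finset.prod_congr rfl fun s _ => ?_
      rw [hwdef]; dsimp only
      split_ifs
      · rw [mul_one]
      · rw [mul_zero, Real.exp_zero]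
    rw [hprod, mul_assoc, ← Real.exp_add]
    split_ifs with hE
    · dsimp only at hE
      have hexp : (0:ℝ) ≤ L * (∑ s : Fin n, (if c ((d s : ℕ)) then (1:ℝ) else 0)) + -(L * θ * n) := by
        nlinarith [hE]
      have h1 : (1:ℝ) ≤ Real.exp (L * (∑ s : Fin n, (if c ((d s : ℕ)) then (1:ℝ) else 0)) + -(L * θ * n)) := by
        have h2 := Real.exp_le_exp.mpr hexp
        rwa [Real.exp_zero] at h2
      have hPi : 0 ≤ ∏ s : Fin n, f ((d s : ℕ)) := prodf_nonneg hf d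
      nlinarith
    · have hPi : 0 ≤ ∏ s : Fin n, f ((d s : ℕ)) := prodf_nonneg hf d
      exact mul_nonneg hPi (Real.exp_pos _).le
  -- Step B
  have stepB : (∑ d : Fin n → Fin (dbar+1), ∏ s : Fin n, (f ((d s : ℕ)) * w ((d s : ℕ))))
      = (p * Real.exp L + (1 - p)) ^ n := by
    rw [sum_prod_pow (fun j : Fin (dbar+1) => f (j:ℕ) * w (j:ℕ)) n]
    congr 1
    rw [Fin.sum_univ_eq_sum_range (fun j => f j * w j) (dbar+1)]
    have hsplit : ∑ j ∈ Finset.range (dbar+1), f j * w j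
        = (∑ j ∈ Finset.range (dbar+1), (if c j then f j else 0)) * Real.exp L
          + ∑ j ∈ Finset.range (dbar+1), (if ¬ c j then f j else 0) := by
      rw [Finset.sum_mul, ← Finset.sum_add_distrib]
      refine Finset.sum_congr rfl fun j _ => ?_
      rw [hwdef]; dsimp only
      split_ifs <;> simp
    rw [hsplit]
    have hc : (∑ j ∈ Finset.range (dbar+1), (if c j then f j else 0)) = p := by
      rw [hp, Finset.sum_filter]
    have hnc : (∑ j ∈ Finset.range (dbar+1), (if ¬ c j then f j else 0)) = 1 - p := by
      have : (∑ j ∈ Finset.range (dbar+1), (if c j then f j else 0))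
          + ∑ j ∈ Finset.range (dbar+1), (if ¬ c j then f j else 0)
          = ∑ j ∈ Finset.range (dbar+1), f j := by
        rw [← Finset.sum_add_distrib]
        refine Finset.sum_congr rfl fun j _ => ?_
        split_ifs <;> simp
      rw [hf.2.2, hc] at this
      linarith
    rw [hc, hnc]
  -- Step C
  have hsum : p * Real.exp L + (1 - p) = (1 - p) / (1 - θ) := by
    rw [hexpL]
    field_simp
    ring
  have hkey : Real.exp (-(L * θ)) * ((1 - p) / (1 - θ)) = Real.exp (-(klB θ p)) := by
    have hq : (0:ℝ) < (1 - p) / (1 - θ) := by positivity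
    rw [← Real.exp_log hq, ← Real.exp_add]
    congr 1
    rw [klB, hLdef, Real.log_div (by positivity) (by positivity),
      Real.log_div (by positivity) (by positivity),
      Real.log_div (by positivity) (by positivity),
      Real.log_div (by positivity) (by positivity),
      Real.log_mul (by positivity) (by positivity),
      Real.log_mul (by positivity) (by positivity)]
    ring
  calc prob dbar n f (fun d => θ * n ≤ ∑ s : Fin n, (if c (d s) then (1:ℝ) else 0))
      ≤ (p * Real.exp L + (1 - p)) ^ n * Real.exp (-(L * θ * n)) := by
        rw [← stepB]; exact stepA
    _ = (Real.exp (-(L * θ)) * ((1 - p) / (1 - θ))) ^ n := by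
        rw [hsum, mul_pow, mul_comm]
        congr 1
        rw [← Real.exp_nat_mul]
        congr 1
        ring
    _ = Real.exp (-(n:ℝ) * klB θ p) := by
        rw [hkey, ← Real.exp_nat_mul]
        congr 1
        ring
open Finset in
lemma cdf_mono {g : ℕ → ℝ} (hg : ∀ k, 0 ≤ g k) {a b : ℕ} (hab : a ≤ b) :
    cdf g a ≤ cdf g b := by
  apply Finset.sum_le_sum_of_subset_of_nonneg
  · exact Finset.range_subset_range.mpr (by omega)
  · exact fun i _ _ => hg i

open Finset in
lemma cdf_le_cdfm1 {g : ℕ → ℝ} (hg : ∀ k, 0 ≤ g k) {a y : ℕ} (hay : a < y) :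
    cdf g a ≤ cdfm1 g y := by
  apply Finset.sum_le_sum_of_subset_of_nonneg
  · exact Finset.range_subset_range.mpr (by omega)
  · exact fun i _ _ => hg i

lemma ystar_le_dbar (dbar : ℕ) (β : ℝ) (g : ℕ → ℝ) : ystar dbar β g ≤ dbar := by
  rw [ystar]
  by_cases hS : {d : ℕ | d ≤ dbar ∧ β ≤ cdf g d}.Nonempty
  · exact (Nat.sInf_mem hS).1
  · rw [Set.not_nonempty_iff_eq_empty.mp hS, Nat.sInf_empty]
    omega

lemma ystar_eq_of {dbar : ℕ} {β : ℝ} {g : ℕ → ℝ} (hg : ∀ k, 0 ≤ g k) {y : ℕ}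
    (hy : y ≤ dbar) (h1 : cdfm1 g y < β) (h2 : β ≤ cdf g y) :
    ystar dbar β g = y := by
  have hyS : y ∈ {d : ℕ | d ≤ dbar ∧ β ≤ cdf g d} := ⟨hy, h2⟩
  have hle : sInf {d : ℕ | d ≤ dbar ∧ β ≤ cdf g d} ≤ y := Nat.sInf_le hyS
  have hmem := Nat.sInf_mem ⟨y, hyS⟩
  rw [ystar]
  by_contra hne
  have hlt : sInf {d : ℕ | d ≤ dbar ∧ β ≤ cdf g d} < y := lt_of_le_of_ne hle hne
  have : cdf g (sInf {d : ℕ | d ≤ dbar ∧ β ≤ cdf g d}) ≤ cdfm1 g y := cdf_le_cdfm1 hg hlt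
  have := hmem.2
  linarith

open Finset in
lemma emp_nonneg (n : ℕ) (d : Fin n → ℕ) (k : ℕ) : 0 ≤ emp n d k := by
  rw [emp]
  apply div_nonneg
  · exact Finset.sum_nonneg fun s _ => by split_ifs <;> norm_num
  · exact Nat.cast_nonneg n

open Finset in
lemma emp_cdfm1 (n : ℕ) (d : Fin n → ℕ) (y : ℕ) :
    cdfm1 (emp n d) y = (∑ s : Fin n, if d s < y then (1:ℝ) else 0) / n := by
  classical
  rw [cdfm1]
  simp only [emp]
  rw [← Finset.sum_div]
  congr 1
  rw [Finset.sum_comm]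
  refine Finset.sum_congr rfl fun s _ => ?_
  calc ∑ i ∈ Finset.range y, (if d s = i then (1:ℝ) else 0)
      = if d s ∈ Finset.range y then (1:ℝ) else 0 := Finset.sum_ite_eq (Finset.range y) (d s) (fun _ => (1:ℝ))
    _ = if d s < y then (1:ℝ) else 0 := if_congr Finset.mem_range rfl rfl

lemma emp_cdf (n : ℕ) (d : Fin n → ℕ) (y : ℕ) :
    cdf (emp n d) y = (∑ s : Fin n, if d s < y + 1 then (1:ℝ) else 0) / n :=
  emp_cdfm1 n d (y+1)

open Finset in
lemma count_split (n : ℕ) (d : Fin n → ℕ) (y : ℕ) :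
    (∑ s : Fin n, if d s < y + 1 then (1:ℝ) else 0)
      + (∑ s : Fin n, if y < d s then (1:ℝ) else 0) = n := by
  classical
  rw [← Finset.sum_add_distrib]
  have : ∀ s : Fin n, (if d s < y + 1 then (1:ℝ) else 0) + (if y < d s then (1:ℝ) else 0) = 1 := by
    intro s
    rcases Nat.lt_or_ge (d s) (y+1) with hs | hs
    · rw [if_pos hs, if_neg (by omega)]; norm_num
    · rw [if_neg (by omega), if_pos (by omega)]; norm_num
  rw [Finset.sum_congr rfl fun s _ => this s]
  simp

section Deviation

variable {dbar : ℕ} {β : ℝ} {f : ℕ → ℝ} (hf : IsDist dbar f)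

open Finset in
lemma yhat_dev {n : ℕ} (hn : 1 ≤ n) (hβ0 : 0 < β) (d : Fin n → ℕ)
    (hne : yhat dbar β n d ≠ ystar dbar β f) :
    (β * n ≤ ∑ s : Fin n, (if d s < ystar dbar β f then (1:ℝ) else 0))
      ∨ ((1 - β) * n ≤ ∑ s : Fin n, (if ystar dbar β f < d s then (1:ℝ) else 0)) := by
  set y := ystar dbar β f with hy
  have hydbar : y ≤ dbar := ystar_le_dbar dbar β f
  have hnpos : (0:ℝ) < n := by exact_mod_cast hn
  by_contra hcon
  push_neg at hcon
  obtain ⟨hc1, hc2⟩ := hcon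
  apply hne
  rw [yhat]
  apply ystar_eq_of (emp_nonneg n d) hydbar
  · rw [emp_cdfm1]
    rw [div_lt_iff₀ hnpos]
    linarith [hc1]
  · rw [emp_cdf]
    rw [le_div_iff₀ hnpos]
    have := count_split n d y
    nlinarith [hc2]

end Deviation

lemma klB_compl (u v : ℝ) : klB (1 - u) (1 - v) = klB u v := by
  rw [klB, klB]
  rw [sub_sub_cancel, sub_sub_cancel]
  ring

open Finset in
lemma filter_lt_range {dbar y : ℕ} (hy : y ≤ dbar + 1) :
    (Finset.range (dbar+1)).filter (· < y) = Finset.range y := by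
  ext i
  simp only [Finset.mem_filter, Finset.mem_range]
  omega

open Finset in
lemma qprob_le {dbar : ℕ} {β : ℝ} {f : ℕ → ℝ} (hf : IsDist dbar f)
    (hβ0 : 0 < β) (hβ1 : β < 1)
    (hα : cdfm1 f (ystar dbar β f) < β) (hγ : β < cdf f (ystar dbar β f))
    {κ : ℝ} (hκpos : 0 < κ)
    (hκα : cdfm1 f (ystar dbar β f) = 0 ∨ κ ≤ klB β (cdfm1 f (ystar dbar β f)))
    (hκγ : cdf f (ystar dbar β f) = 1 ∨ κ ≤ klB β (cdf f (ystar dbar β f)))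
    (n : ℕ) (hn : 1 ≤ n) :
    prob dbar n f (fun d => yhat dbar β n d ≠ ystar dbar β f)
      ≤ 2 * Real.exp (-κ * n) := by
  classical
  set y := ystar dbar β f with hy
  have hydbar : y ≤ dbar := ystar_le_dbar dbar β f
  have step1 : prob dbar n f (fun d => yhat dbar β n d ≠ ystar dbar β f)
      ≤ prob dbar n f (fun d => β * n ≤ ∑ s : Fin n, (if d s < y then (1:ℝ) else 0))
        + prob dbar n f (fun d => (1 - β) * n ≤ ∑ s : Fin n, (if y < d s then (1:ℝ) else 0)) := by
    refine le_trans (prob_mono hf ?_) (prob_or_le hf _ _)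
    exact fun d hd => yhat_dev hn hβ0 d hd
  have bound1 : prob dbar n f (fun d => β * n ≤ ∑ s : Fin n, (if d s < y then (1:ℝ) else 0))
      ≤ Real.exp (-κ * n) := by
    have hpsum : cdfm1 f y = ∑ j ∈ (Finset.range (dbar+1)).filter (· < y), f j := by
      rw [filter_lt_range (by omega), cdfm1]
    by_cases hα0 : cdfm1 f y = 0
    · rw [prob_zero_of_null hf n (· < y) (by rw [← hpsum]; exact hα0) β hβ0 hn]
      exact (Real.exp_pos _).le
    · have hα0' : 0 < cdfm1 f y := by
        rcases lt_or_eq_of_le (Finset.sum_nonneg fun i _ => hf.1 i : 0 ≤ cdfm1 f y) with hlt | heq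
        · exact hlt
        · exact absurd heq.symm hα0
      have hκle : κ ≤ klB β (cdfm1 f y) := by
        rcases hκα with hc | hc
        · exact absurd hc hα0
        · exact hc
      calc prob dbar n f (fun d => β * n ≤ ∑ s : Fin n, (if d s < y then (1:ℝ) else 0))
          ≤ Real.exp (-(n:ℝ) * klB β (cdfm1 f y)) :=
            chernoff hf n (· < y) β (cdfm1 f y) hpsum hα0' hα hβ1
        _ ≤ Real.exp (-κ * n) := by
            apply Real.exp_le_exp.mpr
            have hn0 : (0:ℝ) ≤ n := Nat.cast_nonneg n
            nlinarith
  have bound2 : prob dbar n f (fun d => (1 - β) * n ≤ ∑ s : Fin n, (if y < d s then (1:ℝ) else 0))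
      ≤ Real.exp (-κ * n) := by
    have hpsum : 1 - cdf f y = ∑ j ∈ (Finset.range (dbar+1)).filter (y < ·), f j := by
      have hsplit : (∑ j ∈ (Finset.range (dbar+1)).filter (· < y + 1), f j)
          + ∑ j ∈ (Finset.range (dbar+1)).filter (y < ·), f j
          = ∑ j ∈ Finset.range (dbar+1), f j := by
        rw [← Finset.sum_filter_add_sum_filter_not (Finset.range (dbar+1)) (· < y + 1) f]
        congr 1
        apply Finset.sum_congr _ fun _ _ => rfl
        apply Finset.filter_congr
        intro i _
        constructor
        · intro hi; omega
        · intro hi; omega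
      rw [filter_lt_range (by omega)] at hsplit
      rw [hf.2.2] at hsplit
      have : cdf f y = ∑ j ∈ Finset.range (y+1), f j := rfl
      linarith
    by_cases hγ1 : cdf f y = 1
    · rw [prob_zero_of_null hf n (y < ·) (by rw [← hpsum, hγ1]; ring) (1 - β) (by linarith) hn]
      exact (Real.exp_pos _).le
    · have hγlt : cdf f y < 1 := by
        have hle : cdf f y ≤ 1 := by
          have : cdf f y ≤ ∑ j ∈ Finset.range (dbar+1), f j := by
            apply Finset.sum_le_sum_of_subset_of_nonneg
            · exact Finset.range_subset_range.mpr (by omega)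
            · exact fun i _ _ => hf.1 i
          rw [hf.2.2] at this
          exact this
        exact lt_of_le_of_ne hle hγ1
      have hκle : κ ≤ klB β (cdf f y) := by
        rcases hκγ with hc | hc
        · exact absurd hc hγ1
        · exact hc
      calc prob dbar n f (fun d => (1 - β) * n ≤ ∑ s : Fin n, (if y < d s then (1:ℝ) else 0))
          ≤ Real.exp (-(n:ℝ) * klB (1 - β) (1 - cdf f y)) :=
            chernoff hf n (y < ·) (1 - β) (1 - cdf f y) hpsum (by linarith) (by linarith) (by linarith)
        _ ≤ Real.exp (-κ * n) := by
            apply Real.exp_le_exp.mpr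
            rw [klB_compl]
            have hn0 : (0:ℝ) ≤ n := Nat.cast_nonneg n
            nlinarith
  linarith [step1, bound1, bound2]
section PolStruct

variable {dbar : ℕ} {β : ℝ}

lemma yhat_le_dbar (n : ℕ) (d : Fin n → ℕ) : yhat dbar β n d ≤ dbar :=
  ystar_le_dbar dbar β (emp n d)

lemma pol_le_dbar : ∀ (n : ℕ) (d : Fin n → ℕ), pol dbar β n d ≤ dbar := by
  intro n
  induction n with
  | zero => intro d; rw [pol]; omega
  | succ n ih =>
    intro d
    rw [pol]
    apply max_le (yhat_le_dbar _ _)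
    have := ih (fun s => d s.castSucc)
    omega

open Finset in
lemma yhat_zero (hβ0 : 0 < β) (d : Fin 0 → ℕ) : yhat dbar β 0 d = 0 := by
  rw [yhat, ystar]
  have hempty : {dd : ℕ | dd ≤ dbar ∧ β ≤ cdf (emp 0 d) dd} = ∅ := by
    rw [Set.eq_empty_iff_forall_notMem]
    intro x hx
    have hcdf : cdf (emp 0 d) x = 0 := by
      rw [cdf]
      apply Finset.sum_eq_zero
      intro i _
      rw [emp]
      simp
    have hx2 : β ≤ cdf (emp 0 d) x := hx.2
    rw [hcdf] at hx2
    linarith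
  rw [hempty, Nat.sInf_empty]

open Finset in
noncomputable def Ssum (n : ℕ) (d : Fin n → ℕ) (u : ℕ) : ℤ :=
  ∑ s : Fin n, (if u ≤ (s : ℕ) then (d s : ℤ) else 0)

open Finset in
lemma Ssum_nonneg (n : ℕ) (d : Fin n → ℕ) (u : ℕ) : 0 ≤ Ssum n d u := by
  rw [Ssum]
  refine Finset.sum_nonneg fun s _ => ?_
  split_ifs <;> simp

open Finset in
lemma Ssum_term_le (n : ℕ) (d : Fin n → ℕ) (u : ℕ) (s : Fin n) (hs : u ≤ (s : ℕ)) :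
    (d s : ℤ) ≤ Ssum n d u := by
  rw [Ssum]
  have h := Finset.single_le_sum (f := fun i : Fin n => if u ≤ (i : ℕ) then (d i : ℤ) else 0)
    (fun i _ => by split_ifs <;> simp) (Finset.mem_univ s)
  rwa [if_pos hs] at h

lemma preD_castSucc {n u : ℕ} (hun : u ≤ n) (d : Fin (n+1) → ℕ) :
    preD u (fun s : Fin n => d s.castSucc) = preD u d := by
  funext s
  have hs : (s : ℕ) < n := lt_of_lt_of_le s.isLt hun
  have hs1 : (s : ℕ) < n + 1 := by omega
  show dext (fun s : Fin n => d s.castSucc) s.val = dext d s.val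
  rw [dext, dext, dif_pos hs1, dif_pos hs]
  rfl

lemma preD_self {n : ℕ} (d : Fin n → ℕ) : preD n d = d := by
  funext s
  show dext d s.val = d s
  rw [dext, dif_pos s.isLt]

open Finset in
lemma Ssum_succ {n u : ℕ} (hun : u ≤ n) (d : Fin (n+1) → ℕ) :
    Ssum (n+1) d u = Ssum n (fun s : Fin n => d s.castSucc) u + (d (Fin.last n) : ℤ) := by
  unfold Ssum
  rw [Fin.sum_univ_castSucc]
  simp only [Fin.coe_castSucc, Fin.val_last]
  rw [if_pos hun]

open Finset in
lemma pol_struct (hβ0 : 0 < β) :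
    ∀ (n : ℕ) (d : Fin n → ℕ),
      pol dbar β n d = yhat dbar β n d
        ∨ (yhat dbar β n d < pol dbar β n d
            ∧ ∃ u, u < n ∧ (pol dbar β n d : ℤ)
                = (yhat dbar β u (preD u d) : ℤ) - Ssum n d u) := by
  intro n
  induction n with
  | zero =>
    intro d
    left
    rw [pol, yhat_zero hβ0]
  | succ n ih =>
    intro d
    set d' : Fin n → ℕ := fun s => d s.castSucc with hd'
    have hpol : pol dbar β (n+1) d
        = max (yhat dbar β (n+1) d) (pol dbar β n d' - d (Fin.last n)) := rfl
    by_cases heq : pol dbar β (n+1) d = yhat dbar β (n+1) d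
    · left; exact heq
    · right
      have hgt : yhat dbar β (n+1) d < pol dbar β (n+1) d := by
        rw [hpol]
        rcases Nat.lt_or_ge (yhat dbar β (n+1) d) (pol dbar β n d' - d (Fin.last n)) with hlt | hge
        · omega
        · exfalso; apply heq; rw [hpol]; omega
      refine ⟨hgt, ?_⟩
      have hble : pol dbar β (n+1) d = pol dbar β n d' - d (Fin.last n) := by
        rw [hpol]
        rcases Nat.lt_or_ge (yhat dbar β (n+1) d) (pol dbar β n d' - d (Fin.last n)) with hlt | hge
        · omega
        · exfalso; rw [hpol] at hgt; omega
      have hDP : (d (Fin.last n)) < pol dbar β n d' := by omega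
      have hcast : (pol dbar β (n+1) d : ℤ)
          = (pol dbar β n d' : ℤ) - (d (Fin.last n) : ℤ) := by
        rw [hble]
        push_cast [Nat.cast_sub (le_of_lt hDP)]
        ring
      rcases ih d' with hcase | ⟨_, u, hun, hu⟩
      · -- pol n d' = yhat n d'
        refine ⟨n, by omega, ?_⟩
        have hSs : Ssum (n+1) d n = (d (Fin.last n) : ℤ) := by
          rw [Ssum_succ (le_refl n) d]
          have hz : Ssum n (fun s : Fin n => d s.castSucc) n = 0 := by
            rw [Ssum]
            apply Finset.sum_eq_zero
            intro s _
            rw [if_neg (by omega)]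
          rw [hz, zero_add]
        have hpre : preD n d = d' := by
          rw [← preD_castSucc (le_refl n) d, preD_self]
        rw [hcast, hcase, hSs, hpre]
      · -- inductive case
        refine ⟨u, by omega, ?_⟩
        have hun' : u ≤ n := by omega
        rw [hcast, hu, preD_castSucc hun' d, Ssum_succ hun' d]
        ring
  end PolStruct
lemma pol_ne_imp {dbar : ℕ} {β : ℝ} (hβ0 : 0 < β) (y0 : ℕ) (n : ℕ) (d : Fin n → ℕ)
    (hne : pol dbar β n d ≠ yhat dbar β n d) :
    (yhat dbar β n d ≠ y0)
      ∨ ∃ u, u < n ∧ (yhat dbar β u (preD u d) ≠ y0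
          ∧ ∀ s : Fin n, u ≤ (s : ℕ) → d s ≠ dbar) := by
  rcases pol_struct hβ0 n d with hcase | ⟨hgt, u, hun, heq⟩
  · exact absurd hcase hne
  · by_cases hA : yhat dbar β n d = y0
    · right
      have hSnn := Ssum_nonneg n d u
      have hpolZ : (y0 : ℤ) < (pol dbar β n d : ℤ) := by
        rw [← hA]; exact_mod_cast hgt
      refine ⟨u, hun, ?_, ?_⟩
      · intro h''
        rw [h''] at heq
        omega
      · intro s hs hcontra
        have ht := Ssum_term_le n d u s hs
        rw [hcontra] at ht
        have hyu : yhat dbar β u (preD u d) ≤ dbar := yhat_le_dbar u _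
        have hyuZ : (yhat dbar β u (preD u d) : ℤ) ≤ (dbar : ℤ) := by exact_mod_cast hyu
        omega
    · left; exact hA

open Finset in
lemma Q_le_add {dbar : ℕ} {h b : ℝ} (hh : 0 < h) (hb : 0 < b) {f : ℕ → ℝ}
    (hf : IsDist dbar f) {y y' : ℕ} (hy : y ≤ y') (hy' : y' ≤ dbar) :
    Q h b dbar f y' - Q h b dbar f y ≤ h * dbar := by
  rw [Q, Q, ← Finset.sum_sub_distrib]
  have hstep : ∀ dd ∈ Finset.range (dbar + 1),
      f dd * (h * max ((y' : ℝ) - (dd : ℝ)) 0 + b * max ((dd : ℝ) - (y' : ℝ)) 0)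
        - f dd * (h * max ((y : ℝ) - (dd : ℝ)) 0 + b * max ((dd : ℝ) - (y : ℝ)) 0)
      ≤ f dd * (h * dbar) := by
    intro dd _
    have hfd := hf.1 dd
    have hyR : (y : ℝ) ≤ (y' : ℝ) := by exact_mod_cast hy
    have hy'R : (y' : ℝ) ≤ (dbar : ℝ) := by exact_mod_cast hy'
    have hddR : (0 : ℝ) ≤ (dd : ℝ) := Nat.cast_nonneg dd
    have h1 : max ((y' : ℝ) - (dd : ℝ)) 0 ≤ (dbar : ℝ) := by
      apply max_le
      · linarith
      · linarith [(Nat.cast_nonneg dbar : (0:ℝ) ≤ (dbar:ℝ))]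
    have h2 : (0:ℝ) ≤ max ((y : ℝ) - (dd : ℝ)) 0 := le_max_right _ _
    have h3 : max ((dd : ℝ) - (y' : ℝ)) 0 ≤ max ((dd : ℝ) - (y : ℝ)) 0 :=
      max_le_max (by linarith) le_rfl
    have hterm : (h * max ((y' : ℝ) - (dd : ℝ)) 0 + b * max ((dd : ℝ) - (y' : ℝ)) 0)
        - (h * max ((y : ℝ) - (dd : ℝ)) 0 + b * max ((dd : ℝ) - (y : ℝ)) 0)
        ≤ h * dbar := by nlinarith
    calc f dd * (h * max ((y' : ℝ) - (dd : ℝ)) 0 + b * max ((dd : ℝ) - (y' : ℝ)) 0)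
          - f dd * (h * max ((y : ℝ) - (dd : ℝ)) 0 + b * max ((dd : ℝ) - (y : ℝ)) 0)
        = f dd * ((h * max ((y' : ℝ) - (dd : ℝ)) 0 + b * max ((dd : ℝ) - (y' : ℝ)) 0)
            - (h * max ((y : ℝ) - (dd : ℝ)) 0 + b * max ((dd : ℝ) - (y : ℝ)) 0)) := by ring
      _ ≤ f dd * (h * dbar) := mul_le_mul_of_nonneg_left hterm hfd
  calc ∑ dd ∈ Finset.range (dbar + 1),
        (f dd * (h * max ((y' : ℝ) - (dd : ℝ)) 0 + b * max ((dd : ℝ) - (y' : ℝ)) 0)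
          - f dd * (h * max ((y : ℝ) - (dd : ℝ)) 0 + b * max ((dd : ℝ) - (y : ℝ)) 0))
      ≤ ∑ dd ∈ Finset.range (dbar + 1), f dd * (h * dbar) := Finset.sum_le_sum hstep
    _ = h * dbar := by rw [← Finset.sum_mul, hf.2.2, one_mul]

open Finset in
lemma expec_le_prob {dbar : ℕ} {h b β : ℝ} (hh : 0 < h) (hb : 0 < b) (hβ0 : 0 < β)
    {f : ℕ → ℝ} (hf : IsDist dbar f) (n : ℕ) :
    expec dbar n f (fun d => Q h b dbar f (pol dbar β n d) - Q h b dbar f (yhat dbar β n d))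
      ≤ h * dbar * prob dbar n f (fun d => pol dbar β n d ≠ yhat dbar β n d) := by
  classical
  rw [expec, prob, Finset.mul_sum]
  refine Finset.sum_le_sum fun d _ => ?_
  have hPi : 0 ≤ ∏ s : Fin n, f ((d s : ℕ)) := prodf_nonneg hf d
  by_cases hne : pol dbar β n (fun s => (d s : ℕ)) = yhat dbar β n (fun s => (d s : ℕ))
  · rw [if_neg (by simpa using hne), hne, mul_zero]
    have : Q h b dbar f (yhat dbar β n fun s => (d s : ℕ))
        - Q h b dbar f (yhat dbar β n fun s => (d s : ℕ)) = 0 := by ring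
    rw [this, mul_zero]
  · rw [if_pos (by simpa using hne)]
    have hyp : yhat dbar β n (fun s => (d s : ℕ)) ≤ pol dbar β n (fun s => (d s : ℕ)) := by
      cases n with
      | zero =>
        exfalso
        apply hne
        rw [pol, yhat_zero hβ0]
      | succ m => exact le_max_left _ _
    have hQ : Q h b dbar f (pol dbar β n fun s => (d s : ℕ))
        - Q h b dbar f (yhat dbar β n fun s => (d s : ℕ)) ≤ h * dbar :=
      Q_le_add hh hb hf hyp (pol_le_dbar n _)
    calc (∏ s : Fin n, f ((d s : ℕ)))
          * (Q h b dbar f (pol dbar β n fun s => (d s : ℕ))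
            - Q h b dbar f (yhat dbar β n fun s => (d s : ℕ)))
        ≤ (∏ s : Fin n, f ((d s : ℕ))) * (h * dbar) := mul_le_mul_of_nonneg_left hQ hPi
      _ = h * dbar * ∏ s : Fin n, f ((d s : ℕ)) := by ring

lemma Abound {κ : ℝ} (hκpos : 0 < κ) (τ : ℕ)
    (hτ1 : ∀ t : ℕ, τ + 1 ≤ t → (t : ℝ) ^ 2 * Real.exp (-κ * ((t : ℝ) - 1)) < 1 / 2)
    (hτ2 : ∀ t : ℕ, τ + 1 ≤ t →
      ((t : ℝ) + 1) ^ 2 * Real.exp (-κ * (t : ℝ))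
        < Real.exp (-κ / 2) * ((t : ℝ) ^ 2 * Real.exp (-κ * ((t : ℝ) - 1)))) :
    ∀ t : ℕ, τ + 1 ≤ t →
      (t : ℝ) ^ 2 * Real.exp (-κ * ((t : ℝ) - 1))
        ≤ (1 / 2) * (Real.exp (-κ / 2)) ^ (t - (τ + 1)) := by
  intro t ht
  induction t, ht using Nat.le_induction with
  | base =>
    rw [Nat.sub_self, pow_zero, mul_one]
    exact (hτ1 (τ+1) le_rfl).le
  | succ t ht ih =>
    have hstep := hτ2 t ht
    have hAb : ((t + 1 : ℕ) : ℝ) ^ 2 * Real.exp (-κ * (((t + 1 : ℕ) : ℝ) - 1))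
        = ((t : ℝ) + 1) ^ 2 * Real.exp (-κ * (t : ℝ)) := by
      push_cast
      ring_nf
    rw [hAb]
    have hρ : (0:ℝ) < Real.exp (-κ / 2) := Real.exp_pos _
    have hexp : (t + 1) - (τ + 1) = (t - (τ + 1)) + 1 := by omega
    rw [hexp, pow_succ]
    calc ((t : ℝ) + 1) ^ 2 * Real.exp (-κ * (t : ℝ))
        ≤ Real.exp (-κ / 2) * ((t : ℝ) ^ 2 * Real.exp (-κ * ((t : ℝ) - 1))) := hstep.le
      _ ≤ Real.exp (-κ / 2) * ((1 / 2) * (Real.exp (-κ / 2)) ^ (t - (τ + 1))) :=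
          mul_le_mul_of_nonneg_left ih hρ.le
      _ = 1 / 2 * ((Real.exp (-κ / 2)) ^ (t - (τ + 1)) * Real.exp (-κ / 2)) := by ring

lemma qgeom {κ : ℝ} (hκpos : 0 < κ) (τ : ℕ) (hτ : 1 ≤ τ)
    (hτ1 : ∀ t : ℕ, τ + 1 ≤ t → (t : ℝ) ^ 2 * Real.exp (-κ * ((t : ℝ) - 1)) < 1 / 2)
    (hτ2 : ∀ t : ℕ, τ + 1 ≤ t →
      ((t : ℝ) + 1) ^ 2 * Real.exp (-κ * (t : ℝ))
        < Real.exp (-κ / 2) * ((t : ℝ) ^ 2 * Real.exp (-κ * ((t : ℝ) - 1)))) :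
    ∀ n : ℕ, τ ≤ n →
      2 * Real.exp (-κ * (n : ℝ)) ≤ (1 / 2) * (Real.exp (-κ / 2)) ^ (n - τ) := by
  intro n hn
  have h1 : 2 * Real.exp (-κ * (n : ℝ)) ≤ ((n : ℝ) + 1) ^ 2 * Real.exp (-κ * (n : ℝ)) := by
    have hexp := Real.exp_pos (-κ * (n : ℝ))
    have hn1 : (1:ℝ) ≤ (n : ℝ) := by exact_mod_cast le_trans hτ hn
    have h5 : (2:ℝ) ≤ ((n : ℝ) + 1) ^ 2 := by nlinarith
    exact mul_le_mul_of_nonneg_right h5 hexp.le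
  have h2 : ((n : ℝ) + 1) ^ 2 * Real.exp (-κ * (n : ℝ))
      = ((n + 1 : ℕ) : ℝ) ^ 2 * Real.exp (-κ * (((n + 1 : ℕ) : ℝ) - 1)) := by
    push_cast
    ring_nf
  have h3 := Abound hκpos τ hτ1 hτ2 (n + 1) (by omega)
  have h4 : (n + 1) - (τ + 1) = n - τ := by omega
  rw [h4] at h3
  linarith [h1, h2, h3]

open Finset in
lemma per_n_bound {dbar : ℕ} {β κ : ℝ} {f : ℕ → ℝ} (hf : IsDist dbar f)
    (hβ0 : 0 < β) (hβ1 : β < 1)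
    (hα : cdfm1 f (ystar dbar β f) < β) (hγ : β < cdf f (ystar dbar β f))
    (hκpos : 0 < κ)
    (hκα : cdfm1 f (ystar dbar β f) = 0 ∨ κ ≤ klB β (cdfm1 f (ystar dbar β f)))
    (hκγ : cdf f (ystar dbar β f) = 1 ∨ κ ≤ klB β (cdf f (ystar dbar β f)))
    (hε1 : f dbar ≤ 1)
    (τ n : ℕ) (hn : τ + 2 ≤ n) :
    prob dbar n f (fun d => pol dbar β n d ≠ yhat dbar β n d)
      ≤ 2 * Real.exp (-κ * n) + (1 - f dbar) ^ (n - (τ + 1))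
        + ∑ u ∈ Finset.Ico (τ + 2) n,
            (2 * Real.exp (-κ * u)) * (1 - f dbar) ^ (n - u) := by
  classical
  set y0 := ystar dbar β f with hy0
  have hincl : ∀ d : Fin n → ℕ, (pol dbar β n d ≠ yhat dbar β n d) →
      ((fun d : Fin n → ℕ => yhat dbar β n d ≠ y0) d
        ∨ ((fun d : Fin n → ℕ => (fun _ : Fin (τ+1) → ℕ => True) (preD (τ+1) d)
              ∧ ∀ s : Fin n, (τ+1) ≤ (s : ℕ) → d s ≠ dbar) d
          ∨ (fun d : Fin n → ℕ => ∃ u ∈ Finset.Ico (τ+2) n,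
              ((fun d0 : Fin u → ℕ => yhat dbar β u d0 ≠ y0) (preD u d)
                ∧ ∀ s : Fin n, u ≤ (s : ℕ) → d s ≠ dbar)) d)) := by
    intro d hd
    rcases pol_ne_imp hβ0 y0 n d hd with hA | ⟨u, hun, hAu, hB⟩
    · exact Or.inl hA
    · right
      rcases Nat.lt_or_ge u (τ + 2) with hu | hu
      · left
        exact ⟨trivial, fun s hs => hB s (by omega)⟩
      · right
        exact ⟨u, Finset.mem_Ico.mpr ⟨hu, hun⟩, hAu, hB⟩
  have step1 := prob_mono hf hincl
  have step2 := prob_or_le hf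
    (fun d : Fin n → ℕ => yhat dbar β n d ≠ y0)
    (fun d : Fin n → ℕ => ((fun _ : Fin (τ+1) → ℕ => True) (preD (τ+1) d)
              ∧ ∀ s : Fin n, (τ+1) ≤ (s : ℕ) → d s ≠ dbar)
          ∨ (∃ u ∈ Finset.Ico (τ+2) n,
              ((fun d0 : Fin u → ℕ => yhat dbar β u d0 ≠ y0) (preD u d)
                ∧ ∀ s : Fin n, u ≤ (s : ℕ) → d s ≠ dbar)))
  have step3 := prob_or_le hf
    (fun d : Fin n → ℕ => (fun _ : Fin (τ+1) → ℕ => True) (preD (τ+1) d)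
              ∧ ∀ s : Fin n, (τ+1) ≤ (s : ℕ) → d s ≠ dbar)
    (fun d : Fin n → ℕ => ∃ u ∈ Finset.Ico (τ+2) n,
              ((fun d0 : Fin u → ℕ => yhat dbar β u d0 ≠ y0) (preD u d)
                ∧ ∀ s : Fin n, u ≤ (s : ℕ) → d s ≠ dbar))
  have hsplit : prob dbar n f (fun d => pol dbar β n d ≠ yhat dbar β n d)
      ≤ prob dbar n f (fun d => yhat dbar β n d ≠ y0)
        + (prob dbar n f (fun d => (fun _ : Fin (τ+1) → ℕ => True) (preD (τ+1) d)
              ∧ ∀ s : Fin n, (τ+1) ≤ (s : ℕ) → d s ≠ dbar)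
          + prob dbar n f (fun d => ∃ u ∈ Finset.Ico (τ+2) n,
              ((fun d0 : Fin u → ℕ => yhat dbar β u d0 ≠ y0) (preD u d)
                ∧ ∀ s : Fin n, u ≤ (s : ℕ) → d s ≠ dbar))) := by
    linarith [step1, step2, step3]
  have hb1 : prob dbar n f (fun d => yhat dbar β n d ≠ y0) ≤ 2 * Real.exp (-κ * n) :=
    qprob_le hf hβ0 hβ1 hα hγ hκpos hκα hκγ n (by omega)
  have hb2 : prob dbar n f (fun d => (fun _ : Fin (τ+1) → ℕ => True) (preD (τ+1) d)
        ∧ ∀ s : Fin n, (τ+1) ≤ (s : ℕ) → d s ≠ dbar)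
      ≤ (1 - f dbar) ^ (n - (τ + 1)) := by
    rw [prob_and_suffix hf (τ+1) (fun _ => True) n (by omega)]
    have hle := prob_le_one hf (fun _ : Fin (τ+1) → ℕ => True)
    have hpow : (0:ℝ) ≤ (1 - f dbar) ^ (n - (τ + 1)) := pow_nonneg (by linarith) _
    nlinarith
  have hb3 : prob dbar n f (fun d => ∃ u ∈ Finset.Ico (τ+2) n,
        ((fun d0 : Fin u → ℕ => yhat dbar β u d0 ≠ y0) (preD u d)
          ∧ ∀ s : Fin n, u ≤ (s : ℕ) → d s ≠ dbar))
      ≤ ∑ u ∈ Finset.Ico (τ + 2) n, (2 * Real.exp (-κ * u)) * (1 - f dbar) ^ (n - u) := by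
    refine le_trans (prob_exists_le hf (Finset.Ico (τ+2) n)
      (fun u d => (fun d0 : Fin u → ℕ => yhat dbar β u d0 ≠ y0) (preD u d)
          ∧ ∀ s : Fin n, u ≤ (s : ℕ) → d s ≠ dbar)) ?_
    refine Finset.sum_le_sum fun u hu => ?_
    have hu' := Finset.mem_Ico.mp hu
    rw [prob_and_suffix hf u (fun d0 : Fin u → ℕ => yhat dbar β u d0 ≠ y0) n (by omega)]
    have hq : prob dbar u f (fun d0 => yhat dbar β u d0 ≠ y0) ≤ 2 * Real.exp (-κ * u) :=
      qprob_le hf hβ0 hβ1 hα hγ hκpos hκα hκγ u (by omega)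
    have hpow : (0:ℝ) ≤ (1 - f dbar) ^ (n - u) := pow_nonneg (by linarith) _
    exact mul_le_mul_of_nonneg_right hq hpow
  linarith
open Finset in
theorem stmt7 (dbar : ℕ) (hdbar : 1 ≤ dbar) (h b : ℝ) (hh : 0 < h) (hb : 0 < b)
    (β : ℝ) (hβ : β = b / (h + b)) (f : ℕ → ℝ) (hf : IsDist dbar f)
    (hα : cdfm1 f (ystar dbar β f) < β) (hγ : β < cdf f (ystar dbar β f))
    (κ : ℝ) (hκpos : 0 < κ)
    (hκα : cdfm1 f (ystar dbar β f) = 0 ∨ κ ≤ klB β (cdfm1 f (ystar dbar β f)))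
    (hκγ : cdf f (ystar dbar β f) = 1 ∨ κ ≤ klB β (cdf f (ystar dbar β f)))
    (τ : ℕ) (hτ : 1 ≤ τ)
    (hτ1 : ∀ t : ℕ, τ + 1 ≤ t → (t : ℝ) ^ 2 * Real.exp (-κ * ((t : ℝ) - 1)) < 1 / 2)
    (hτ2 : ∀ t : ℕ, τ + 1 ≤ t →
      ((t : ℝ) + 1) ^ 2 * Real.exp (-κ * (t : ℝ))
        < Real.exp (-κ / 2) * ((t : ℝ) ^ 2 * Real.exp (-κ * ((t : ℝ) - 1))))
    (hε : 0 < f dbar)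
    (T : ℕ) (hT : 1 ≤ T) :
    regretT2 h b dbar β f T
      ≤ h * (dbar : ℝ) * ((τ : ℝ) + 1 / (1 - Real.exp (-κ / 2)) + (1 - f dbar) / f dbar
          + 1 / (2 * f dbar * (1 - Real.exp (-κ / 2)))) := by
  have hβ0 : 0 < β := by rw [hβ]; positivity
  have hβ1 : β < 1 := by
    rw [hβ, div_lt_one (by linarith)]
    linarith
  set ρ : ℝ := Real.exp (-κ / 2) with hρdef
  set ε : ℝ := f dbar with hεdef
  have hρ0 : 0 < ρ := Real.exp_pos _
  have hρ1 : ρ < 1 := by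
    rw [hρdef, ← Real.exp_zero]
    exact Real.exp_lt_exp.mpr (by linarith)
  have h1ρ : 0 < 1 - ρ := by linarith
  have hεle : ε ≤ 1 := by
    have h1 : f dbar ≤ ∑ j ∈ Finset.range (dbar + 1), f j :=
      Finset.single_le_sum (fun i _ => hf.1 i) (Finset.mem_range.mpr (by omega))
    rw [hf.2.2] at h1
    exact h1
  -- geometric bounds
  have hgeo : ∀ N : ℕ, ∑ i ∈ Finset.range N, ρ ^ i ≤ 1 / (1 - ρ) :=
    fun N => geomLe ρ hρ0.le hρ1 N
  have hkey : ∀ M : ℕ, ∑ n ∈ Finset.Ico (τ + 2) M, 2 * Real.exp (-κ * (n : ℝ))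
      ≤ 1 / (2 * (1 - ρ)) := by
    intro M
    calc ∑ n ∈ Finset.Ico (τ + 2) M, 2 * Real.exp (-κ * (n : ℝ))
        ≤ ∑ n ∈ Finset.Ico (τ + 2) M, (1 / 2) * ρ ^ (n - τ) := by
          refine Finset.sum_le_sum fun n hn => ?_
          have hn' := Finset.mem_Ico.mp hn
          exact qgeom hκpos τ hτ hτ1 hτ2 n (by omega)
      _ = ∑ i ∈ Finset.range (M - (τ + 2)), (1 / 2) * ρ ^ ((τ + 2 + i) - τ) := by
          rw [Finset.sum_Ico_eq_sum_range]
      _ ≤ ∑ i ∈ Finset.range (M - (τ + 2)), (1 / 2) * ρ ^ i := by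
          refine Finset.sum_le_sum fun i _ => ?_
          have hle : ρ ^ ((τ + 2 + i) - τ) ≤ ρ ^ i := by
            apply pow_le_pow_of_le_one hρ0.le hρ1.le
            omega
          linarith
      _ = (1 / 2) * ∑ i ∈ Finset.range (M - (τ + 2)), ρ ^ i := by
          rw [Finset.mul_sum]
      _ ≤ (1 / 2) * (1 / (1 - ρ)) := by
          have := hgeo (M - (τ + 2))
          linarith
      _ = 1 / (2 * (1 - ρ)) := by
          field_simp
  have hinner : ∀ (a M : ℕ), ∑ n ∈ Finset.Ico (a + 1) M, (1 - ε) ^ (n - a) ≤ (1 - ε) / ε := by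
    intro a M
    calc ∑ n ∈ Finset.Ico (a + 1) M, (1 - ε) ^ (n - a)
        = ∑ i ∈ Finset.range (M - (a + 1)), (1 - ε) ^ ((a + 1 + i) - a) := by
          rw [Finset.sum_Ico_eq_sum_range]
      _ = ∑ i ∈ Finset.range (M - (a + 1)), (1 - ε) * (1 - ε) ^ i := by
          refine Finset.sum_congr rfl fun i _ => ?_
          have : (a + 1 + i) - a = i + 1 := by omega
          rw [this, pow_succ]
          ring
      _ = (1 - ε) * ∑ i ∈ Finset.range (M - (a + 1)), (1 - ε) ^ i := by
          rw [Finset.mul_sum]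
      _ ≤ (1 - ε) * (1 / (1 - (1 - ε))) := by
          apply mul_le_mul_of_nonneg_left (geomLe (1 - ε) (by linarith) (by linarith) _)
          linarith
      _ = (1 - ε) / ε := by
          have : 1 - (1 - ε) = ε := by ring
          rw [this]
          ring
  -- sum of per-n probabilities
  have hPB : ∑ n ∈ Finset.Ico 2 T,
      prob dbar n f (fun d => pol dbar β n d ≠ yhat dbar β n d)
      ≤ (τ : ℝ) + 1 / (1 - ρ) + (1 - ε) / ε + 1 / (2 * ε * (1 - ρ)) := by
    have hpos1 : (0:ℝ) < 1 / (1 - ρ) := by positivity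
    have hpos2 : (0:ℝ) ≤ (1 - ε) / ε := div_nonneg (by linarith) hε.le
    have hpos3 : (0:ℝ) < 1 / (2 * ε * (1 - ρ)) := by positivity
    have hcard : ∀ (a c : ℕ), ∑ n ∈ Finset.Ico a c,
        prob dbar n f (fun d => pol dbar β n d ≠ yhat dbar β n d) ≤ ((c - a : ℕ) : ℝ) := by
      intro a c
      calc ∑ n ∈ Finset.Ico a c, prob dbar n f (fun d => pol dbar β n d ≠ yhat dbar β n d)
          ≤ ∑ n ∈ Finset.Ico a c, (1:ℝ) := Finset.sum_le_sum fun n _ => prob_le_one hf _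
        _ = ((c - a : ℕ) : ℝ) := by
            rw [Finset.sum_const, Nat.card_Ico]
            simp
    rcases le_or_gt T (τ + 2) with hTc | hTc
    · have := hcard 2 T
      have hcast : ((T - 2 : ℕ) : ℝ) ≤ (τ : ℝ) := by exact_mod_cast (by omega : T - 2 ≤ τ)
      linarith
    · rw [← Finset.sum_Ico_consecutive
        (fun n => prob dbar n f (fun d => pol dbar β n d ≠ yhat dbar β n d))
        (show 2 ≤ τ + 2 by omega) (le_of_lt hTc)]
      have hpart1 : ∑ n ∈ Finset.Ico 2 (τ + 2),
          prob dbar n f (fun d => pol dbar β n d ≠ yhat dbar β n d) ≤ (τ : ℝ) := by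
        have := hcard 2 (τ + 2)
        have hcast : ((τ + 2 - 2 : ℕ) : ℝ) = (τ : ℝ) := by norm_cast
        linarith [hcast ▸ this]
      have hpart2 : ∑ n ∈ Finset.Ico (τ + 2) T,
          prob dbar n f (fun d => pol dbar β n d ≠ yhat dbar β n d)
          ≤ 1 / (1 - ρ) + (1 - ε) / ε + 1 / (2 * ε * (1 - ρ)) := by
        have hper : ∑ n ∈ Finset.Ico (τ + 2) T,
            prob dbar n f (fun d => pol dbar β n d ≠ yhat dbar β n d)
            ≤ ∑ n ∈ Finset.Ico (τ + 2) T,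
                (2 * Real.exp (-κ * n) + (1 - ε) ^ (n - (τ + 1))
                  + ∑ u ∈ Finset.Ico (τ + 2) n,
                      (2 * Real.exp (-κ * u)) * (1 - ε) ^ (n - u)) := by
          refine Finset.sum_le_sum fun n hn => ?_
          have hn' := Finset.mem_Ico.mp hn
          exact per_n_bound hf hβ0 hβ1 hα hγ hκpos hκα hκγ hεle τ n hn'.1
        have hsplit : ∑ n ∈ Finset.Ico (τ + 2) T,
            (2 * Real.exp (-κ * n) + (1 - ε) ^ (n - (τ + 1))
              + ∑ u ∈ Finset.Ico (τ + 2) n,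
                  (2 * Real.exp (-κ * u)) * (1 - ε) ^ (n - u))
            = (∑ n ∈ Finset.Ico (τ + 2) T, 2 * Real.exp (-κ * n))
              + (∑ n ∈ Finset.Ico (τ + 2) T, (1 - ε) ^ (n - (τ + 1)))
              + ∑ n ∈ Finset.Ico (τ + 2) T, ∑ u ∈ Finset.Ico (τ + 2) n,
                  (2 * Real.exp (-κ * u)) * (1 - ε) ^ (n - u) := by
          rw [← Finset.sum_add_distrib, ← Finset.sum_add_distrib]
        have hq : (∑ n ∈ Finset.Ico (τ + 2) T, 2 * Real.exp (-κ * n)) ≤ 1 / (1 - ρ) := by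
          have h1 := hkey T
          have h2 : 1 / (2 * (1 - ρ)) ≤ 1 / (1 - ρ) := by
            apply one_div_le_one_div_of_le h1ρ
            linarith
          linarith
        have hr : (∑ n ∈ Finset.Ico (τ + 2) T, (1 - ε) ^ (n - (τ + 1))) ≤ (1 - ε) / ε :=
          hinner (τ + 1) T
        have hs : (∑ n ∈ Finset.Ico (τ + 2) T, ∑ u ∈ Finset.Ico (τ + 2) n,
              (2 * Real.exp (-κ * u)) * (1 - ε) ^ (n - u)) ≤ 1 / (2 * ε * (1 - ρ)) := by
          have hswap : (∑ n ∈ Finset.Ico (τ + 2) T, ∑ u ∈ Finset.Ico (τ + 2) n,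
                (2 * Real.exp (-κ * u)) * (1 - ε) ^ (n - u))
              = ∑ u ∈ Finset.Ico (τ + 2) T, ∑ n ∈ Finset.Ico (u + 1) T,
                  (2 * Real.exp (-κ * u)) * (1 - ε) ^ (n - u) := by
            apply Finset.sum_comm'
            intro n u
            simp only [Finset.mem_Ico]
            omega
          rw [hswap]
          calc ∑ u ∈ Finset.Ico (τ + 2) T, ∑ n ∈ Finset.Ico (u + 1) T,
                (2 * Real.exp (-κ * u)) * (1 - ε) ^ (n - u)
              ≤ ∑ u ∈ Finset.Ico (τ + 2) T, (2 * Real.exp (-κ * u)) * (1 / ε) := by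
                refine Finset.sum_le_sum fun u _ => ?_
                rw [← Finset.mul_sum]
                apply mul_le_mul_of_nonneg_left _ (by positivity)
                have h1 := hinner u T
                have h2 : (1 - ε) / ε ≤ 1 / ε :=
                  (div_le_div_iff_of_pos_right hε).mpr (by linarith)
                linarith
            _ = (∑ u ∈ Finset.Ico (τ + 2) T, 2 * Real.exp (-κ * u)) * (1 / ε) := by
                rw [Finset.sum_mul]
            _ ≤ (1 / (2 * (1 - ρ))) * (1 / ε) := by
                apply mul_le_mul_of_nonneg_right (hkey T) (by positivity)
            _ = 1 / (2 * ε * (1 - ρ)) := by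
                field_simp
        linarith [hper, hsplit ▸ hper, hq, hr, hs]
      linarith [hpart1, hpart2]
  -- conclude
  have hhd : (0:ℝ) ≤ h * (dbar : ℝ) := by positivity
  calc regretT2 h b dbar β f T
      = ∑ n ∈ Finset.Ico 2 T, expec dbar n f
          (fun d => Q h b dbar f (pol dbar β n d) - Q h b dbar f (yhat dbar β n d)) := rfl
    _ ≤ ∑ n ∈ Finset.Ico 2 T, h * (dbar : ℝ)
          * prob dbar n f (fun d => pol dbar β n d ≠ yhat dbar β n d) :=
        Finset.sum_le_sum fun n _ => expec_le_prob hh hb hβ0 hf n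
    _ = h * (dbar : ℝ) * ∑ n ∈ Finset.Ico 2 T,
          prob dbar n f (fun d => pol dbar β n d ≠ yhat dbar β n d) := by
        rw [Finset.mul_sum]
    _ ≤ h * (dbar : ℝ) * ((τ : ℝ) + 1 / (1 - ρ) + (1 - ε) / ε + 1 / (2 * ε * (1 - ρ))) :=
        mul_le_mul_of_nonneg_left hPB hhd
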